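/- Let A₁,…,A_m ∈ ℝ^{d₁×d₂}, b ∈ ℝ^m, 𝒜(X) := (⟨A₁, X⟩, …, ⟨A_m, X⟩), and f(L, R) := ‖𝒜(LRᵀ) − b‖₂² on ℝ^{d₁×k} × ℝ^{d₂×k}, with ‖(L,R)‖ := √(‖L‖_F² + ‖R‖_F²). Then for every B > 0 and all points (L₁,R₁), (L₂,R₂) with ‖(L₁,R₁)‖ ≤ B and ‖(L₂,R₂)‖ ≤ B, and every direction (U, V), |D²f(L₁,R₁)[(U,V),(U,V)] − D²f(L₂,R₂)[(U,V),(U,V)]| ≤ 12·B·(Σᵢ ‖Aᵢ‖_F²)·(‖U‖_F² + ‖V‖_F²)·‖(L₁,R₁) − (L₂,R₂)‖; equivalently, the operator norm of the difference of Hessians of f at these two points is at most 12·B·(Σᵢ ‖Aᵢ‖_F²)·‖(L₁,R₁) − (L₂,R₂)‖. -/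

import Mathlib

open Matrix
open scoped RealInnerProductSpace

noncomputable section

attribute [local instance] Matrix.frobeniusNormedAddCommGroup Matrix.frobeniusNormedSpace

/-- The linear measurement map `𝒜(X) = (⟨A₁,X⟩, …, ⟨A_m,X⟩)`, where `⟨A,X⟩ = tr(AᵀX)`. -/
def calA {m d₁ d₂ : ℕ} (A : Fin m → Matrix (Fin d₁) (Fin d₂) ℝ)
    (X : Matrix (Fin d₁) (Fin d₂) ℝ) : EuclideanSpace ℝ (Fin m) :=
  (WithLp.equiv 2 (Fin m → ℝ)).symm fun i => Matrix.trace ((A i)ᵀ * X)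

/-- The matrix-factorization objective `f(L,R) = ‖𝒜(LRᵀ) − b‖₂²`. -/
def mfObj {m d₁ d₂ k : ℕ} (A : Fin m → Matrix (Fin d₁) (Fin d₂) ℝ)
    (b : EuclideanSpace ℝ (Fin m))
    (p : Matrix (Fin d₁) (Fin k) ℝ × Matrix (Fin d₂) (Fin k) ℝ) : ℝ :=
  ‖calA A (p.1 * p.2ᵀ) - b‖ ^ 2

/-- Squared Frobenius norm. -/
def frobSq {d₁ d₂ : ℕ} (X : Matrix (Fin d₁) (Fin d₂) ℝ) : ℝ := ∑ i, ∑ j, X i j ^ 2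

/-!
With `Φ((L, R), (L', R')) = 𝒜(L R'ᵀ)` bilinear, `f(x) = ‖Φ(x, x) - b‖²`, so
`D²f(x)[v, v] = 2 ‖Φ(x, v) + Φ(v, x)‖² + 4 ⟪Φ(x, x) - b, Φ(v, v)⟫`.
Cauchy–Schwarz gives `‖𝒜 X‖ ≤ (Σᵢ ‖Aᵢ‖_F²)^{1/2} ‖X‖_F` and
`‖X Vᵀ + U Yᵀ‖_F ≤ ‖(X, Y)‖ ‖(U, V)‖`. Writing `S = Σᵢ ‖Aᵢ‖_F²`, `s = ‖U‖_F² + ‖V‖_F²` and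
`δ = ‖(L₁, R₁) - (L₂, R₂)‖`, each of the two terms then moves by at most `4 B S s δ` between
the two points, since `‖a‖² - ‖b‖² = (‖a‖ - ‖b‖)(‖a‖ + ‖b‖)` and
`L₁ R₁ᵀ - L₂ R₂ᵀ = L₁ (R₁ - R₂)ᵀ + (L₁ - L₂) R₂ᵀ`.
-/

section QuadraticResidual

variable {E G : Type*} [NormedAddCommGroup E] [NormedSpace ℝ E]
  [NormedAddCommGroup G] [InnerProductSpace ℝ G] (Φ : E →L[ℝ] E →L[ℝ] G) (c : G)

theorem hasFDerivAt_apply_self (x : E) : HasFDerivAt (fun y => Φ y y) (Φ x + Φ.flip x) x := by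
  simpa using Φ.hasFDerivAt.clm_apply (hasFDerivAt_id x)

theorem fderiv_norm_sq_apply_self_sub :
    fderiv ℝ (fun y => ‖Φ y y - c‖ ^ 2) =
      fun x => 2 • (innerSL ℝ (Φ x x - c)).comp (Φ x + Φ.flip x) :=
  funext fun x => ((hasFDerivAt_apply_self Φ x).sub_const c).norm_sq.fderiv

theorem iteratedFDeriv_two_norm_sq_apply_self_sub (x v : E) :
    iteratedFDeriv ℝ 2 (fun y => ‖Φ y y - c‖ ^ 2) x ![v, v] =
      2 * ‖Φ x v + Φ v x‖ ^ 2 + 4 * ⟪Φ x x - c, Φ v v⟫ := by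
  have hinner : HasFDerivAt (fun y => innerSL ℝ (Φ y y - c))
      ((innerSL ℝ).comp (Φ x + Φ.flip x)) x :=
    (innerSL ℝ).hasFDerivAt.comp x ((hasFDerivAt_apply_self Φ x).sub_const c)
  have hlin : HasFDerivAt (fun y => Φ y + Φ.flip y) (Φ + Φ.flip) x := (Φ + Φ.flip).hasFDerivAt
  have hsecond : HasFDerivAt (fun y => 2 • (innerSL ℝ (Φ y y - c)).comp (Φ y + Φ.flip y)) _ x :=
    (hinner.clm_comp hlin).const_smul 2
  rw [iteratedFDeriv_two_apply, fderiv_norm_sq_apply_self_sub, hsecond.fderiv]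
  simp only [Fin.isValue, cons_val_zero, cons_val_one, cons_val_fin_one,
    _root_.smul_apply, _root_.add_apply, ContinuousLinearMap.comp_apply,
    ContinuousLinearMap.compL_apply, ContinuousLinearMap.flip_apply, coe_innerSL_apply,
    nsmul_eq_mul, Nat.cast_ofNat]
  rw [real_inner_self_eq_norm_sq, inner_add_right]
  ring

end QuadraticResidual

theorem abs_norm_sq_sub_norm_sq_le {F : Type*} [SeminormedAddCommGroup F] (a b : F) :
    |‖a‖ ^ 2 - ‖b‖ ^ 2| ≤ ‖a - b‖ * (‖a‖ + ‖b‖) := by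
  have hsum : 0 ≤ ‖a‖ + ‖b‖ := by positivity
  rw [sq_sub_sq, abs_mul, abs_of_nonneg hsum, mul_comm (‖a‖ + ‖b‖)]
  exact mul_le_mul_of_nonneg_right (abs_norm_sub_norm_le a b) hsum

section FrobeniusEstimates

variable {l n p : Type*} [Fintype l] [Fintype n] [Fintype p]

theorem frobSq_eq_norm_sq {d₁ d₂ : ℕ} (X : Matrix (Fin d₁) (Fin d₂) ℝ) : frobSq X = ‖X‖ ^ 2 := by
  simp only [frobenius_norm_def, ← Real.sqrt_eq_rpow, Real.rpow_two, Real.norm_eq_abs, sq_abs]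
  exact (Real.sq_sqrt (Finset.sum_nonneg fun _ _ => Finset.sum_nonneg fun _ _ => sq_nonneg _)).symm

theorem abs_trace_transpose_mul_le (Y X : Matrix l n ℝ) : |trace (Yᵀ * X)| ≤ ‖Y‖ * ‖X‖ := by
  have htrace : trace (Yᵀ * X) = ∑ ij : l × n, Y ij.1 ij.2 * X ij.1 ij.2 := by
    simp only [trace, diag, mul_apply, transpose_apply, Fintype.sum_prod_type]
    exact Finset.sum_comm
  have hnorm (Z : Matrix l n ℝ) : ‖Z‖ = √(∑ ij : l × n, Z ij.1 ij.2 ^ 2) := by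
    simp [frobenius_norm_def, Real.sqrt_eq_rpow, Fintype.sum_prod_type]
  rw [htrace, hnorm Y, hnorm X, ← Real.sqrt_mul (by positivity)]
  exact Real.abs_le_sqrt (Finset.sum_mul_sq_le_sq_mul_sq _ _ _)

theorem norm_mul_transpose_add_le (X : Matrix l n ℝ) (Y : Matrix p n ℝ) (U : Matrix l n ℝ)
    (V : Matrix p n ℝ) :
    ‖X * Vᵀ + U * Yᵀ‖ ≤ √(‖X‖ ^ 2 + ‖Y‖ ^ 2) * √(‖U‖ ^ 2 + ‖V‖ ^ 2) :=
  calc ‖X * Vᵀ + U * Yᵀ‖ ≤ ‖X‖ * ‖V‖ + ‖Y‖ * ‖U‖ := by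
        grw [norm_add_le, frobenius_norm_mul, frobenius_norm_mul, frobenius_norm_transpose,
          frobenius_norm_transpose, mul_comm ‖U‖]
    _ ≤ √(‖X‖ ^ 2 + ‖Y‖ ^ 2) * √(‖V‖ ^ 2 + ‖U‖ ^ 2) := by
        simpa [Fin.sum_univ_two] using
          Real.sum_mul_le_sqrt_mul_sqrt Finset.univ ![‖X‖, ‖Y‖] ![‖V‖, ‖U‖]
    _ = √(‖X‖ ^ 2 + ‖Y‖ ^ 2) * √(‖U‖ ^ 2 + ‖V‖ ^ 2) := by rw [add_comm (‖V‖ ^ 2)]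

end FrobeniusEstimates

section MatrixFactorization

variable {m d₁ d₂ k : ℕ} (A : Fin m → Matrix (Fin d₁) (Fin d₂) ℝ)

def calACLM : Matrix (Fin d₁) (Fin d₂) ℝ →L[ℝ] EuclideanSpace ℝ (Fin m) :=
  LinearMap.toContinuousLinearMap
    { toFun := calA A
      map_add' X Y := by ext i; simp [calA, Matrix.mul_add]
      map_smul' c X := by ext i; simp [calA] }

@[simp]
theorem calACLM_apply (X : Matrix (Fin d₁) (Fin d₂) ℝ) : calACLM A X = calA A X := rfl

theorem norm_calA_le (X : Matrix (Fin d₁) (Fin d₂) ℝ) :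
    ‖calA A X‖ ≤ √(∑ i, ‖A i‖ ^ 2) * ‖X‖ := by
  rw [EuclideanSpace.norm_eq, ← Real.sqrt_sq (norm_nonneg X), ← Real.sqrt_mul (by positivity),
    Finset.sum_mul]
  refine Real.sqrt_le_sqrt (Finset.sum_le_sum fun i _ => ?_)
  rw [Real.norm_eq_abs, sq_abs, ← mul_pow, ← sq_abs]
  exact pow_le_pow_left₀ (abs_nonneg _) (abs_trace_transpose_mul_le (A i) X) 2

theorem norm_calA_mul_transpose_add_le (X U : Matrix (Fin d₁) (Fin k) ℝ)
    (Y V : Matrix (Fin d₂) (Fin k) ℝ) :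
    ‖calA A (X * Vᵀ + U * Yᵀ)‖ ≤
      √(∑ i, ‖A i‖ ^ 2) * (√(‖X‖ ^ 2 + ‖Y‖ ^ 2) * √(‖U‖ ^ 2 + ‖V‖ ^ 2)) :=
  (norm_calA_le A _).trans <|
    mul_le_mul_of_nonneg_left (norm_mul_transpose_add_le X Y U V) (Real.sqrt_nonneg _)

def calAMulTransposeCLM :
    (Matrix (Fin d₁) (Fin k) ℝ × Matrix (Fin d₂) (Fin k) ℝ) →L[ℝ]
      (Matrix (Fin d₁) (Fin k) ℝ × Matrix (Fin d₂) (Fin k) ℝ) →L[ℝ] EuclideanSpace ℝ (Fin m) :=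
  LinearMap.toContinuousLinearMap <| (LinearMap.toContinuousLinearMap).toLinearMap ∘ₗ
    (((mulLinearMap ℝ).compl₂
      ((transposeLinearEquiv _ _ ℝ ℝ).toLinearMap ∘ₗ LinearMap.snd ℝ _ _)).comp
      (LinearMap.fst ℝ _ _)).compr₂ (calACLM A).toLinearMap

theorem iteratedFDeriv_two_mfObj (b : EuclideanSpace ℝ (Fin m))
    (x v : Matrix (Fin d₁) (Fin k) ℝ × Matrix (Fin d₂) (Fin k) ℝ) :
    iteratedFDeriv ℝ 2 (mfObj A b) x ![v, v] =
      2 * ‖calA A (x.1 * v.2ᵀ + v.1 * x.2ᵀ)‖ ^ 2 +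
        4 * ⟪calA A (x.1 * x.2ᵀ) - b, calA A (v.1 * v.2ᵀ)⟫ := by
  rw [← calACLM_apply, map_add]
  exact iteratedFDeriv_two_norm_sq_apply_self_sub (calAMulTransposeCLM A) b x v

end MatrixFactorization

section HessianLipschitz

variable {m d₁ d₂ k : ℕ} (A : Fin m → Matrix (Fin d₁) (Fin d₂) ℝ) {B : ℝ}
  (L₁ L₂ U : Matrix (Fin d₁) (Fin k) ℝ) (R₁ R₂ V : Matrix (Fin d₂) (Fin k) ℝ)

theorem abs_norm_sq_calA_linearization_sub_le
    (h₁ : √(‖L₁‖ ^ 2 + ‖R₁‖ ^ 2) ≤ B) (h₂ : √(‖L₂‖ ^ 2 + ‖R₂‖ ^ 2) ≤ B) :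
    |‖calA A (L₁ * Vᵀ + U * R₁ᵀ)‖ ^ 2 - ‖calA A (L₂ * Vᵀ + U * R₂ᵀ)‖ ^ 2| ≤
      2 * B * (∑ i, ‖A i‖ ^ 2) * (‖U‖ ^ 2 + ‖V‖ ^ 2) *
        √(‖L₁ - L₂‖ ^ 2 + ‖R₁ - R₂‖ ^ 2) := by
  set C := √(∑ i, ‖A i‖ ^ 2)
  set σ := √(‖U‖ ^ 2 + ‖V‖ ^ 2)
  set δ := √(‖L₁ - L₂‖ ^ 2 + ‖R₁ - R₂‖ ^ 2)
  have hdiff : calA A (L₁ * Vᵀ + U * R₁ᵀ) - calA A (L₂ * Vᵀ + U * R₂ᵀ) =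
      calA A ((L₁ - L₂) * Vᵀ + U * (R₁ - R₂)ᵀ) := by
    simp only [← calACLM_apply, ← map_sub, Matrix.sub_mul, transpose_sub, Matrix.mul_sub]
    abel_nf
  have hp₁ : ‖calA A (L₁ * Vᵀ + U * R₁ᵀ)‖ ≤ C * (B * σ) :=
    (norm_calA_mul_transpose_add_le A L₁ U R₁ V).trans (by gcongr)
  have hp₂ : ‖calA A (L₂ * Vᵀ + U * R₂ᵀ)‖ ≤ C * (B * σ) :=
    (norm_calA_mul_transpose_add_le A L₂ U R₂ V).trans (by gcongr)
  calc _ ≤ ‖calA A (L₁ * Vᵀ + U * R₁ᵀ) - calA A (L₂ * Vᵀ + U * R₂ᵀ)‖ *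
        (‖calA A (L₁ * Vᵀ + U * R₁ᵀ)‖ + ‖calA A (L₂ * Vᵀ + U * R₂ᵀ)‖) :=
        abs_norm_sq_sub_norm_sq_le _ _
    _ ≤ C * (δ * σ) * (C * (B * σ) + C * (B * σ)) := by
        rw [hdiff]
        gcongr
        exact norm_calA_mul_transpose_add_le A _ U _ V
    _ = 2 * B * C ^ 2 * σ ^ 2 * δ := by ring
    _ = _ := by rw [Real.sq_sqrt (by positivity), Real.sq_sqrt (by positivity)]

theorem abs_inner_calA_residual_sub_le (b : EuclideanSpace ℝ (Fin m))
    (h₁ : √(‖L₁‖ ^ 2 + ‖R₁‖ ^ 2) ≤ B) (h₂ : √(‖L₂‖ ^ 2 + ‖R₂‖ ^ 2) ≤ B) :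
    |⟪calA A (L₁ * R₁ᵀ) - b, calA A (U * Vᵀ)⟫ - ⟪calA A (L₂ * R₂ᵀ) - b, calA A (U * Vᵀ)⟫| ≤
      B * (∑ i, ‖A i‖ ^ 2) * (‖U‖ ^ 2 + ‖V‖ ^ 2) * √(‖L₁ - L₂‖ ^ 2 + ‖R₁ - R₂‖ ^ 2) := by
  set C := √(∑ i, ‖A i‖ ^ 2)
  set δ := √(‖L₁ - L₂‖ ^ 2 + ‖R₁ - R₂‖ ^ 2)
  obtain ⟨hB, hLR₁⟩ := Real.sqrt_le_iff.mp h₁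
  obtain ⟨-, hLR₂⟩ := Real.sqrt_le_iff.mp h₂
  have hdiff : calA A (L₁ * R₁ᵀ) - calA A (L₂ * R₂ᵀ) =
      calA A (L₁ * (R₁ - R₂)ᵀ + (L₁ - L₂) * R₂ᵀ) := by
    simp only [← calACLM_apply, ← map_sub, Matrix.sub_mul, transpose_sub, Matrix.mul_sub]
    abel_nf
  have hcross : √(‖L₁‖ ^ 2 + ‖R₂‖ ^ 2) ≤ 2 * B :=
    Real.sqrt_le_iff.mpr ⟨by positivity, by nlinarith [sq_nonneg ‖R₁‖, sq_nonneg ‖L₂‖]⟩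
  have hUV : ‖calA A (U * Vᵀ)‖ ≤ C * ((‖U‖ ^ 2 + ‖V‖ ^ 2) / 2) := by
    refine (norm_calA_le A _).trans (mul_le_mul_of_nonneg_left ?_ (Real.sqrt_nonneg _))
    grw [frobenius_norm_mul, frobenius_norm_transpose]
    linarith [two_mul_le_add_sq ‖U‖ ‖V‖]
  calc _ = |⟪calA A (L₁ * R₁ᵀ) - calA A (L₂ * R₂ᵀ), calA A (U * Vᵀ)⟫| := by
        rw [← inner_sub_left, sub_sub_sub_cancel_right]
    _ ≤ C * (2 * B * δ) * (C * ((‖U‖ ^ 2 + ‖V‖ ^ 2) / 2)) := by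
        refine (abs_real_inner_le_norm _ _).trans
          (mul_le_mul ?_ hUV (norm_nonneg _) (by positivity))
        rw [hdiff]
        refine (norm_calA_mul_transpose_add_le A L₁ (L₁ - L₂) R₂ (R₁ - R₂)).trans ?_
        gcongr
    _ = B * C ^ 2 * (‖U‖ ^ 2 + ‖V‖ ^ 2) * δ := by ring
    _ = _ := by rw [Real.sq_sqrt (by positivity)]

end HessianLipschitz

theorem hessian_lipschitz_matrix_factorization_objective_general
    (m d₁ d₂ k : ℕ) (A : Fin m → Matrix (Fin d₁) (Fin d₂) ℝ)
    (b : EuclideanSpace ℝ (Fin m)) (B : ℝ)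
    (L₁ L₂ U : Matrix (Fin d₁) (Fin k) ℝ) (R₁ R₂ V : Matrix (Fin d₂) (Fin k) ℝ)
    (h₁ : Real.sqrt (frobSq L₁ + frobSq R₁) ≤ B)
    (h₂ : Real.sqrt (frobSq L₂ + frobSq R₂) ≤ B) :
    |iteratedFDeriv ℝ 2 (mfObj A b) (L₁, R₁) ![(U, V), (U, V)] -
        iteratedFDeriv ℝ 2 (mfObj A b) (L₂, R₂) ![(U, V), (U, V)]| ≤
      12 * B * (∑ i, frobSq (A i)) * (frobSq U + frobSq V) *
        Real.sqrt (frobSq (L₁ - L₂) + frobSq (R₁ - R₂)) := by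
  simp only [frobSq_eq_norm_sq] at h₁ h₂ ⊢
  simp only [iteratedFDeriv_two_mfObj]
  have hfirst := abs_norm_sq_calA_linearization_sub_le A L₁ L₂ U R₁ R₂ V h₁ h₂
  have hsecond := abs_inner_calA_residual_sub_le A L₁ L₂ U R₁ R₂ V b h₁ h₂
  have hB : 0 ≤ B := (Real.sqrt_nonneg _).trans h₁
  have hbound : 0 ≤ B * (∑ i, ‖A i‖ ^ 2) * (‖U‖ ^ 2 + ‖V‖ ^ 2) *
      √(‖L₁ - L₂‖ ^ 2 + ‖R₁ - R₂‖ ^ 2) := by positivity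
  rw [abs_le] at hfirst hsecond ⊢
  constructor <;> linarith [hfirst.1, hfirst.2, hsecond.1, hsecond.2]

/-- the Hessian of `f(L,R) = ‖𝒜(LRᵀ) − b‖₂²` is Lipschitz on the ball of radius
`B`: for all `(L₁,R₁), (L₂,R₂)` with `‖(Lᵢ,Rᵢ)‖ ≤ B` and every direction `(U,V)`,
`|D²f(L₁,R₁)[(U,V),(U,V)] − D²f(L₂,R₂)[(U,V),(U,V)]|
  ≤ 12 B (Σᵢ ‖Aᵢ‖_F²) (‖U‖_F² + ‖V‖_F²) ‖(L₁,R₁) − (L₂,R₂)‖`,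
where `‖(L,R)‖ = √(‖L‖_F² + ‖R‖_F²)`. -/
theorem hessian_lipschitz_matrix_factorization_objective
    (m d₁ d₂ k : ℕ) (A : Fin m → Matrix (Fin d₁) (Fin d₂) ℝ)
    (b : EuclideanSpace ℝ (Fin m)) (B : ℝ) (hB : 0 < B)
    (L₁ L₂ U : Matrix (Fin d₁) (Fin k) ℝ) (R₁ R₂ V : Matrix (Fin d₂) (Fin k) ℝ)
    (h₁ : Real.sqrt (frobSq L₁ + frobSq R₁) ≤ B)
    (h₂ : Real.sqrt (frobSq L₂ + frobSq R₂) ≤ B) :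
    |iteratedFDeriv ℝ 2 (mfObj A b) (L₁, R₁) ![(U, V), (U, V)] -
        iteratedFDeriv ℝ 2 (mfObj A b) (L₂, R₂) ![(U, V), (U, V)]| ≤
      12 * B * (∑ i, frobSq (A i)) * (frobSq U + frobSq V) *
        Real.sqrt (frobSq (L₁ - L₂) + frobSq (R₁ - R₂)) :=
  hessian_lipschitz_matrix_factorization_objective_general m d₁ d₂ k A b B L₁ L₂ U R₁ R₂ V h₁ h₂
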